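/- Let |W⟩ = (|100⟩ + |010⟩ + |001⟩)/√3 in ℂ² ⊗ ℂ² ⊗ ℂ², and let {e₁ = x|0⟩ + y|1⟩, e₂ = ȳ|0⟩ − x̄|1⟩} (with |x|² + |y|² = 1) be an orthonormal basis of the first qubit. If the first qubit is measured in this basis, then: (a) the outcome e₁ occurs with probability (1 + |x|²)/3 and the outcome e₂ with probability (2 − |x|²)/3; (b) the single-qubit reduced density matrix of the conditional state of the remaining two qubits given outcome e₁ has eigenvalues 1/2 ± √(−3|x|⁴ + 2|x|² + 1)/(2 + 2|x|²); (c) given outcome e₂ it has eigenvalues 1/2 ± √(4|x|² − 3|x|⁴)/(4 − 2|x|²). -/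

import Mathlib

open Matrix Polynomial

/-- The three-qubit W state vector `(|100⟩ + |010⟩ + |001⟩)/√3`. -/
noncomputable def wVec : Fin 2 × Fin 2 × Fin 2 → ℂ := fun t =>
  if t = (1, 0, 0) ∨ t = (0, 1, 0) ∨ t = (0, 0, 1) then ((1 / Real.sqrt 3 : ℝ) : ℂ) else 0

/-- The (unnormalized) conditional state of the last two qubits after measuring the first qubit
of `ψ` with outcome `w`. -/
noncomputable def condVec3 (ψ : Fin 2 × Fin 2 × Fin 2 → ℂ) (w : Fin 2 → ℂ) :
    Fin 2 × Fin 2 → ℂ := fun bc => ∑ a, star (w a) * ψ (a, bc.1, bc.2)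

/-- The reduced density matrix of the first qubit of a two-qubit pure state `φ`. -/
noncomputable def reducedFst (φ : Fin 2 × Fin 2 → ℂ) : Matrix (Fin 2) (Fin 2) ℂ :=
  fun b b' => ∑ c, φ (b, c) * star (φ (b', c))
/-
Measuring the first qubit of `W` with outcome `w` leaves the last two qubits in the
(unnormalized) state `(w̄₁|00⟩ + w̄₀|01⟩ + w̄₀|10⟩)/√3`, whose squared norm is the outcome
probability `(2|w₀|² + |w₁|²)/3`. For a two-qubit vector `u` with coefficient matrix `A`, the
reduced density matrix is `A Aᴴ`: its trace is `‖u‖²` and its determinant is `|det A|²`. After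
normalization the trace is `1`, so the eigenvalues are `1/2 ± √(1/4 - |det A|²/‖u‖⁴)`, and here
`|det A|² = |w₀|⁴/9`.
-/

lemma charpoly_fin_two_eq_of_trace_of_det {R : Type*} [CommRing R] [Nontrivial R]
    (M : Matrix (Fin 2) (Fin 2) R) {a b : R} (htr : M.trace = a + b) (hdet : M.det = a * b) :
    M.charpoly = (X - C a) * (X - C b) := by
  rw [charpoly_fin_two, htr, hdet, C_add, C_mul]
  ring

lemma reducedFst_div_ofReal (u : Fin 2 × Fin 2 → ℂ) (r : ℝ) :
    reducedFst (fun bc => u bc / r) = ((r : ℂ) ^ 2)⁻¹ • reducedFst u := by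
  ext b b'
  simp only [reducedFst, Matrix.smul_apply, smul_eq_mul, Finset.mul_sum, star_div₀,
    Complex.star_def, Complex.conj_ofReal]
  exact Finset.sum_congr rfl fun _ _ => by ring

lemma trace_reducedFst (u : Fin 2 × Fin 2 → ℂ) :
    (reducedFst u).trace = ((∑ bc, ‖u bc‖ ^ 2 : ℝ) : ℂ) := by
  simp [trace, reducedFst, Fintype.sum_prod_type, Complex.mul_conj']

lemma det_reducedFst (u : Fin 2 × Fin 2 → ℂ) :
    (reducedFst u).det = ((‖u (0, 0) * u (1, 1) - u (0, 1) * u (1, 0)‖ ^ 2 : ℝ) : ℂ) := by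
  rw [det_fin_two, Complex.ofReal_pow, ← Complex.mul_conj']
  simp only [reducedFst, Fin.sum_univ_two, Complex.star_def, map_sub, map_mul]
  ring

theorem charpoly_reducedFst_normalized (u : Fin 2 × Fin 2 → ℂ) (hu : 0 < ∑ bc, ‖u bc‖ ^ 2)
    {s : ℝ} (hs : s ^ 2 = 1 / 4 - ‖u (0, 0) * u (1, 1) - u (0, 1) * u (1, 0)‖ ^ 2 /
      (∑ bc, ‖u bc‖ ^ 2) ^ 2) :
    (reducedFst fun bc => u bc / (√(∑ bc, ‖u bc‖ ^ 2) : ℂ)).charpoly =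
      (X - C ((1 / 2 + s : ℝ) : ℂ)) * (X - C ((1 / 2 - s : ℝ) : ℂ)) := by
  have hN : (√(∑ bc, ‖u bc‖ ^ 2) : ℂ) ^ 2 = (∑ bc, ‖u bc‖ ^ 2 : ℝ) := by
    rw [← Complex.ofReal_pow, Real.sq_sqrt hu.le]
  have hN0 : ((∑ bc, ‖u bc‖ ^ 2 : ℝ) : ℂ) ≠ 0 := by exact_mod_cast hu.ne'
  apply charpoly_fin_two_eq_of_trace_of_det
  · rw [reducedFst_div_ofReal, trace_smul, trace_reducedFst, hN, smul_eq_mul,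
      inv_mul_cancel₀ hN0]
    push_cast
    ring
  · rw [reducedFst_div_ofReal, det_smul, det_reducedFst, hN, Fintype.card_fin]
    have key : (∑ bc, ‖u bc‖ ^ 2)⁻¹ ^ 2 * ‖u (0, 0) * u (1, 1) - u (0, 1) * u (1, 0)‖ ^ 2 =
        (1 / 2 + s) * (1 / 2 - s) := by
      linear_combination hs
    exact_mod_cast key

lemma condVec3_wVec_zero_zero (w : Fin 2 → ℂ) :
    condVec3 wVec w (0, 0) = star (w 1) * ((1 / √3 : ℝ) : ℂ) := by
  simp [condVec3, wVec]

lemma condVec3_wVec_zero_one (w : Fin 2 → ℂ) :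
    condVec3 wVec w (0, 1) = star (w 0) * ((1 / √3 : ℝ) : ℂ) := by
  simp [condVec3, wVec]

lemma condVec3_wVec_one_zero (w : Fin 2 → ℂ) :
    condVec3 wVec w (1, 0) = star (w 0) * ((1 / √3 : ℝ) : ℂ) := by
  simp [condVec3, wVec]

lemma condVec3_wVec_one_one (w : Fin 2 → ℂ) :
    condVec3 wVec w (1, 1) = 0 := by
  simp [condVec3, wVec]

lemma norm_one_div_sqrt_three_sq : ‖((1 / √3 : ℝ) : ℂ)‖ ^ 2 = 1 / 3 := by
  rw [Complex.norm_real, Real.norm_eq_abs, sq_abs, div_pow, Real.sq_sqrt (by norm_num)]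
  norm_num

lemma sum_norm_sq_condVec3_wVec (w : Fin 2 → ℂ) :
    ∑ bc, ‖condVec3 wVec w bc‖ ^ 2 = (2 * ‖w 0‖ ^ 2 + ‖w 1‖ ^ 2) / 3 := by
  simp only [Fintype.sum_prod_type, Fin.sum_univ_two, condVec3_wVec_zero_zero,
    condVec3_wVec_zero_one, condVec3_wVec_one_zero, condVec3_wVec_one_one, norm_mul, norm_star,
    mul_pow, norm_zero, norm_one_div_sqrt_three_sq]
  ring

lemma norm_sq_det_condVec3_wVec (w : Fin 2 → ℂ) :
    ‖condVec3 wVec w (0, 0) * condVec3 wVec w (1, 1) -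
        condVec3 wVec w (0, 1) * condVec3 wVec w (1, 0)‖ ^ 2 = ‖w 0‖ ^ 4 / 9 := by
  simp only [condVec3_wVec_zero_zero, condVec3_wVec_zero_one, condVec3_wVec_one_zero,
    condVec3_wVec_one_one, mul_zero, zero_sub, norm_neg, norm_mul, norm_star, mul_pow,
    norm_one_div_sqrt_three_sq]
  ring

theorem charpoly_reducedFst_condVec3_wVec (w : Fin 2 → ℂ) (hw : 0 < 2 * ‖w 0‖ ^ 2 + ‖w 1‖ ^ 2)
    {s : ℝ} (hs : s ^ 2 = 1 / 4 - (‖w 0‖ ^ 2 / (2 * ‖w 0‖ ^ 2 + ‖w 1‖ ^ 2)) ^ 2) :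
    (reducedFst fun bc => condVec3 wVec w bc / (√(∑ bc, ‖condVec3 wVec w bc‖ ^ 2) : ℂ)).charpoly =
      (X - C ((1 / 2 + s : ℝ) : ℂ)) * (X - C ((1 / 2 - s : ℝ) : ℂ)) := by
  apply charpoly_reducedFst_normalized
  · rw [sum_norm_sq_condVec3_wVec]
    positivity
  · rw [hs, sum_norm_sq_condVec3_wVec, norm_sq_det_condVec3_wVec]
    field_simp
    ring

/-- measuring the first qubit of the W state in the basis
`{e₁ = x|0⟩+y|1⟩, e₂ = ȳ|0⟩−x̄|1⟩}`: (a) the outcomes occur with probabilities `(1+|x|²)/3` and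
`(2−|x|²)/3`; (b),(c) the single-qubit reduced density matrices of the normalized conditional
states have the indicated eigenvalues. -/
theorem w_state_measurement_probabilities_and_conditional_spectra
    (x y : ℂ) (hxy : ‖x‖ ^ 2 + ‖y‖ ^ 2 = 1)
    (e : Fin 2 → (Fin 2 → ℂ))
    (he1 : e 0 = fun a => if a = 0 then x else y)
    (he2 : e 1 = fun a => if a = 0 then star y else -star x)
    (p : Fin 2 → ℝ) (hp : ∀ i, p i = ∑ bc, ‖condVec3 wVec (e i) bc‖ ^ 2)
    (φ : Fin 2 → (Fin 2 × Fin 2 → ℂ))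
    (hφ : ∀ i bc, φ i bc = condVec3 wVec (e i) bc / ((Real.sqrt (p i) : ℝ) : ℂ)) :
    (p 0 = (1 + ‖x‖ ^ 2) / 3 ∧ p 1 = (2 - ‖x‖ ^ 2) / 3)
    ∧ (reducedFst (φ 0)).charpoly =
        (X - C ((1 / 2 + Real.sqrt (-3 * ‖x‖ ^ 4 + 2 * ‖x‖ ^ 2 + 1) / (2 + 2 * ‖x‖ ^ 2) : ℝ) : ℂ)) *
        (X - C ((1 / 2 - Real.sqrt (-3 * ‖x‖ ^ 4 + 2 * ‖x‖ ^ 2 + 1) / (2 + 2 * ‖x‖ ^ 2) : ℝ) : ℂ))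
    ∧ (reducedFst (φ 1)).charpoly =
        (X - C ((1 / 2 + Real.sqrt (4 * ‖x‖ ^ 2 - 3 * ‖x‖ ^ 4) / (4 - 2 * ‖x‖ ^ 2) : ℝ) : ℂ)) *
        (X - C ((1 / 2 - Real.sqrt (4 * ‖x‖ ^ 2 - 3 * ‖x‖ ^ 4) / (4 - 2 * ‖x‖ ^ 2) : ℝ) : ℂ)) := by
  have hy : ‖y‖ ^ 2 = 1 - ‖x‖ ^ 2 := by linarith
  have hx1 : ‖x‖ ^ 2 ≤ 1 := by nlinarith [sq_nonneg ‖y‖]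
  have he1_norm : ‖e 0 0‖ ^ 2 = ‖x‖ ^ 2 ∧ ‖e 0 1‖ ^ 2 = 1 - ‖x‖ ^ 2 := by simp [he1, hy]
  have he2_norm : ‖e 1 0‖ ^ 2 = 1 - ‖x‖ ^ 2 ∧ ‖e 1 1‖ ^ 2 = ‖x‖ ^ 2 := by simp [he2, hy]
  have hφ_eq : ∀ i, φ i = fun bc =>
      condVec3 wVec (e i) bc / (√(∑ bc, ‖condVec3 wVec (e i) bc‖ ^ 2) : ℂ) := fun i =>
    funext fun bc => by rw [hφ, hp]
  refine ⟨⟨?_, ?_⟩, ?_, ?_⟩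
  · rw [hp, sum_norm_sq_condVec3_wVec, he1_norm.1, he1_norm.2]
    ring
  · rw [hp, sum_norm_sq_condVec3_wVec, he2_norm.1, he2_norm.2]
    ring
  · rw [hφ_eq]
    apply charpoly_reducedFst_condVec3_wVec <;> rw [he1_norm.1, he1_norm.2]
    · nlinarith
    · rw [div_pow, Real.sq_sqrt (by nlinarith),
        show 2 * ‖x‖ ^ 2 + (1 - ‖x‖ ^ 2) = 1 + ‖x‖ ^ 2 by ring]
      field_simp
      ring
  · rw [hφ_eq]
    apply charpoly_reducedFst_condVec3_wVec <;> rw [he2_norm.1, he2_norm.2]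
    · nlinarith
    · have h2 : 2 - ‖x‖ ^ 2 ≠ 0 := by linarith
      rw [div_pow, Real.sq_sqrt (by nlinarith),
        show 2 * (1 - ‖x‖ ^ 2) + ‖x‖ ^ 2 = 2 - ‖x‖ ^ 2 by ring,
        show 4 - 2 * ‖x‖ ^ 2 = 2 * (2 - ‖x‖ ^ 2) by ring]
      field_simp
      ring
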